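/- Let H be a Hilbert space with an orthogonal direct sum decomposition H = ⊕_{n=0}^∞ H_n into finite-dimensional subspaces with dim H_n ≤ n^{d−1} for all sufficiently large n (for some fixed positive integer d). Let T be a bounded self-adjoint operator on H with T(H_n) ⊆ H_n for all n, and suppose there exist constants M > 0 and 0 ≤ c < 1 such that ‖(T − I)|_{H_n}‖ ≤ M c^n for all n. Then T − I is a trace class operator. -/

import Mathlib

open scoped InnerProductSpace
open MvPolynomial Module

noncomputable section

/-- The `n`-th approximation number of a bounded operator: the distance from `T`
to the set of operators of rank at most `n`. For compact operators on Hilbert space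
these are the singular values. -/
def approxNumber {H K : Type*} [NormedAddCommGroup H] [NormedAddCommGroup K]
    [NormedSpace ℂ H] [NormedSpace ℂ K] (T : H →L[ℂ] K) (n : ℕ) : ℝ :=
  sInf {c : ℝ | ∃ F : H →L[ℂ] K,
    Module.rank ℂ (LinearMap.range (F : H →ₗ[ℂ] K)) ≤ (n : Cardinal) ∧ c = ‖T - F‖}

/-- Membership in the Schatten `p`-class, expressed via approximation numbers
(= singular values): `∑ aₙ(T)^p < ∞`. -/
def MemSchatten {H K : Type*} [NormedAddCommGroup H] [NormedAddCommGroup K]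
    [NormedSpace ℂ H] [NormedSpace ℂ K] (p : ℝ) (T : H →L[ℂ] K) : Prop :=
  Summable fun n : ℕ => approxNumber T n ^ p


/-!
Put `A = T - 1` and `K_N = H_0 ⊕ ⋯ ⊕ H_N`. Because `A` preserves the mutually orthogonal `H_n`,
Pythagoras gives `‖A x‖ ≤ M c^(N+1) ‖x‖` on the algebraic sum of the `H_n` with `n > N`, hence on
its closure, which contains `K_Nᗮ`. So the operator `A P_{K_N}`, of rank at most `dim K_N`, lies
within `M c^(N+1)` of `A`. The approximation numbers are antitone, so grouping them into blocks
between consecutive values of `N + dim K_N` bounds their partial sums by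
`C + ∑_N (dim H_(N+1) + 1) M c^(N+1)`, which converges since `dim H_n ≤ n^(d-1)` eventually.
-/

open Filter Finset
open scoped Function

section ApproxNumber

variable {H K : Type*} [NormedAddCommGroup H] [NormedAddCommGroup K]
  [NormedSpace ℂ H] [NormedSpace ℂ K]

lemma approxNumber_nonneg (T : H →L[ℂ] K) (n : ℕ) : 0 ≤ approxNumber T n :=
  Real.sInf_nonneg fun _ ⟨_, _, hr⟩ => hr ▸ norm_nonneg _

lemma approxNumber_le_norm_sub {T F : H →L[ℂ] K} {n : ℕ}
    (hF : Module.rank ℂ (LinearMap.range (F : H →ₗ[ℂ] K)) ≤ n) :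
    approxNumber T n ≤ ‖T - F‖ :=
  csInf_le ⟨0, fun _ ⟨_, _, hr⟩ => hr ▸ norm_nonneg _⟩ ⟨F, hF, rfl⟩

lemma approxNumber_antitone (T : H →L[ℂ] K) : Antitone (approxNumber T) := by
  intro m n hmn
  refine le_csInf ⟨_, 0, by simp, rfl⟩ ?_
  rintro _ ⟨F, hF, rfl⟩
  exact approxNumber_le_norm_sub (hF.trans (Nat.cast_le.mpr hmn))

end ApproxNumber

section Blocks

variable {a b : ℕ → ℝ} {g : ℕ → ℕ}

lemma sum_range_le_of_antitone_of_blocks (ha : Antitone a) (hg : Monotone g)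
    (hab : ∀ N, a (g N) ≤ b N) (K : ℕ) :
    ∑ n ∈ range (g K), a n ≤ g 0 * a 0 + ∑ N ∈ range K, ((g (N + 1) - g N : ℕ) : ℝ) * b N := by
  induction K with
  | zero =>
    simpa using sum_le_card_nsmul (range (g 0)) a (a 0) fun n _ => ha n.zero_le
  | succ K ih =>
    have hblock : ∑ n ∈ Ico (g K) (g (K + 1)), a n ≤ ((g (K + 1) - g K : ℕ) : ℝ) * b K := by
      calc ∑ n ∈ Ico (g K) (g (K + 1)), a n ≤ ∑ _n ∈ Ico (g K) (g (K + 1)), b K :=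
            sum_le_sum fun n hn => (ha (mem_Ico.1 hn).1).trans (hab K)
        _ = _ := by simp
    rw [← sum_range_add_sum_Ico _ (hg K.le_succ), sum_range_succ]
    linarith

lemma summable_of_antitone_of_blocks (ha0 : ∀ n, 0 ≤ a n) (ha : Antitone a) (hg : Monotone g)
    (hgn : ∀ n, n ≤ g n) (hab : ∀ N, a (g N) ≤ b N)
    (hb : Summable fun N => ((g (N + 1) - g N : ℕ) : ℝ) * b N) : Summable a := by
  refine summable_of_sum_range_le ha0 (c := g 0 * a 0 + ∑' N, ((g (N + 1) - g N : ℕ) : ℝ) * b N)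
    fun n => ?_
  calc ∑ i ∈ range n, a i ≤ ∑ i ∈ range (g n), a i :=
        sum_le_sum_of_subset_of_nonneg (range_subset_range.2 (hgn n)) fun i _ _ => ha0 i
    _ ≤ g 0 * a 0 + ∑ N ∈ range n, ((g (N + 1) - g N : ℕ) : ℝ) * b N :=
        sum_range_le_of_antitone_of_blocks ha hg hab n
    _ ≤ _ := by
        gcongr
        exact hb.sum_le_tsum _ fun N _ => mul_nonneg (Nat.cast_nonneg _) ((ha0 _).trans (hab N))

end Blocks

lemma summable_succ_mul_geometric_of_eventually_le_pow {m : ℕ → ℕ} {k : ℕ}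
    (hm : ∀ᶠ n in atTop, m n ≤ n ^ k) {c : ℝ} (hc0 : 0 ≤ c) (hc1 : c < 1) :
    Summable fun n => ((m n + 1 : ℕ) : ℝ) * c ^ n := by
  have hc : ‖c‖ < 1 := by rwa [Real.norm_of_nonneg hc0]
  refine ((summable_pow_mul_geometric_of_norm_lt_one k hc).add
    (summable_geometric_of_lt_one hc0 hc1)).of_norm_bounded_eventually_nat ?_
  filter_upwards [hm] with n hn
  rw [Real.norm_of_nonneg (by positivity), Nat.cast_succ, add_mul, one_mul]
  gcongr
  exact_mod_cast hn

lemma finrank_finset_sup_le {K V ι : Type*} [DivisionRing K] [AddCommGroup V] [Module K V]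
    (W : ι → Submodule K V) [∀ i, FiniteDimensional K (W i)] (s : Finset ι) :
    finrank K ↥(s.sup W) ≤ ∑ i ∈ s, finrank K (W i) := by
  classical
  induction s using Finset.induction_on with
  | empty => simp
  | insert i s hi ih =>
    rw [sup_insert, sum_insert hi]
    exact (Submodule.finrank_add_le_finrank_add_finrank _ _).trans (by omega)

section Orthogonal

variable {𝕜 E ι : Type*} [RCLike 𝕜] [NormedAddCommGroup E] [InnerProductSpace 𝕜 E]
  {V : ι → Submodule 𝕜 E}

lemma norm_apply_le_of_mem_iSup (hV : Pairwise ((· ⟂ ·) on V)) {A : E →L[𝕜] E}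
    (hAV : ∀ i, ∀ v ∈ V i, A v ∈ V i) {ε : ℝ} (hε : 0 ≤ ε)
    (hA : ∀ i, ∀ v ∈ V i, ‖A v‖ ≤ ε * ‖v‖) {x : E} (hx : x ∈ ⨆ i, V i) :
    ‖A x‖ ≤ ε * ‖x‖ := by
  obtain ⟨f, hf, rfl⟩ := (Submodule.mem_iSup_iff_exists_finsupp V x).1 hx
  have hfam := OrthogonalFamily.of_pairwise hV
  have hsum : ‖f.sum fun _ v => v‖ ^ 2 = ∑ i ∈ f.support, ‖f i‖ ^ 2 :=
    hfam.norm_sum (fun i => ⟨f i, hf i⟩) f.support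
  have hAsum : ‖A (f.sum fun _ v => v)‖ ^ 2 = ∑ i ∈ f.support, ‖A (f i)‖ ^ 2 := by
    rw [Finsupp.sum, map_sum]
    exact hfam.norm_sum (fun i => ⟨A (f i), hAV i _ (hf i)⟩) f.support
  refine (pow_le_pow_iff_left₀ (norm_nonneg _) (by positivity) two_ne_zero).1 ?_
  rw [mul_pow, hAsum, hsum, mul_sum]
  refine sum_le_sum fun i _ => ?_
  rw [← mul_pow]
  exact pow_le_pow_left₀ (norm_nonneg _) (hA i _ (hf i)) 2

lemma rank_range_comp_starProjection_le (A : E →L[𝕜] E) (U : Submodule 𝕜 E)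
    [FiniteDimensional 𝕜 U] :
    Module.rank 𝕜 (LinearMap.range ((A ∘L U.starProjection : E →L[𝕜] E) : E →ₗ[𝕜] E)) ≤
      finrank 𝕜 U := by
  rw [finrank_eq_rank]
  refine (LinearMap.rank_comp_le_right (U.starProjection : E →ₗ[𝕜] E) (A : E →ₗ[𝕜] E)).trans_eq ?_
  rw [LinearMap.rank, U.range_starProjection]

variable (s : Finset ι)

lemma isOrtho_finset_sup_of_notMem (hV : Pairwise ((· ⟂ ·) on V)) {i : ι} (hi : i ∉ s) :
    V i ⟂ s.sup V := by
  rw [Finset.sup_eq_iSup, Submodule.isOrtho_iSup_right]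
  exact fun j => Submodule.isOrtho_iSup_right.2 fun hj => hV (ne_of_mem_of_not_mem hj hi).symm

variable [(s.sup V).HasOrthogonalProjection]

lemma starProjection_orthogonal_mem_closure (hV : Pairwise ((· ⟂ ·) on V))
    (hdense : (⨆ i, V i).topologicalClosure = ⊤) (x : E) :
    (s.sup V)ᗮ.starProjection x ∈ (⨆ (i) (_ : i ∉ s), V i).topologicalClosure := by
  set Q := (s.sup V)ᗮ.starProjection
  suffices h : (⨆ i, V i).topologicalClosure ≤
      (⨆ (i) (_ : i ∉ s), V i).topologicalClosure.comap (Q : E →ₗ[𝕜] E) from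
    h (hdense ▸ Submodule.mem_top)
  refine Submodule.topologicalClosure_minimal _ (iSup_le fun i v hv => ?_)
    ((Submodule.isClosed_topologicalClosure _).preimage Q.continuous)
  by_cases hi : i ∈ s
  · have hQv : Q v = 0 := (Submodule.starProjection_apply_eq_zero_iff _).2
      ((s.sup V).le_orthogonal_orthogonal (Finset.le_sup (f := V) hi hv))
    simp [hQv]
  · have hv' : v ∈ (s.sup V)ᗮ :=
      Submodule.isOrtho_iff_le.1 (isOrtho_finset_sup_of_notMem s hV hi) hv
    rw [Submodule.mem_comap]
    change Q v ∈ _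
    rw [Submodule.starProjection_eq_self_iff.2 hv']
    exact Submodule.le_topologicalClosure _
      (Submodule.mem_iSup_of_mem i (Submodule.mem_iSup_of_mem hi hv))

lemma norm_sub_comp_starProjection_le (hV : Pairwise ((· ⟂ ·) on V))
    (hdense : (⨆ i, V i).topologicalClosure = ⊤) {A : E →L[𝕜] E}
    (hAV : ∀ i, ∀ v ∈ V i, A v ∈ V i) {ε : ℝ} (hε : 0 ≤ ε)
    (hA : ∀ i ∉ s, ∀ v ∈ V i, ‖A v‖ ≤ ε * ‖v‖) :
    ‖A - A ∘L (s.sup V).starProjection‖ ≤ ε := by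
  have htail : ∀ x ∈ (⨆ (i) (_ : i ∉ s), V i), ‖A x‖ ≤ ε * ‖x‖ := by
    intro x hx
    rw [iSup_subtype'] at hx
    exact norm_apply_le_of_mem_iSup (V := fun i : {i // i ∉ s} => V i)
      (fun i j hij => hV (Subtype.coe_injective.ne hij)) (fun i => hAV i) hε (fun i => hA i i.2) hx
  have hclosure : ∀ x ∈ (⨆ (i) (_ : i ∉ s), V i).topologicalClosure, ‖A x‖ ≤ ε * ‖x‖ :=
    fun x hx => closure_minimal (t := {x | ‖A x‖ ≤ ε * ‖x‖}) htail
      (isClosed_le (by fun_prop) (by fun_prop)) hx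
  refine ContinuousLinearMap.opNorm_le_bound _ hε fun x => ?_
  have hsplit : (A - A ∘L (s.sup V).starProjection) x = A ((s.sup V)ᗮ.starProjection x) := by
    simp [Submodule.starProjection_orthogonal_val]
  calc ‖(A - A ∘L (s.sup V).starProjection) x‖
      ≤ ε * ‖(s.sup V)ᗮ.starProjection x‖ :=
        hsplit ▸ hclosure _ (starProjection_orthogonal_mem_closure s hV hdense x)
    _ ≤ ε * ‖x‖ := by gcongr; exact Submodule.norm_starProjection_apply_le _ x

end Orthogonal

lemma approxNumber_sum_finrank_le {E ι : Type*} [NormedAddCommGroup E] [InnerProductSpace ℂ E]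
    {V : ι → Submodule ℂ E} [∀ i, FiniteDimensional ℂ (V i)] (hV : Pairwise ((· ⟂ ·) on V))
    (hdense : (⨆ i, V i).topologicalClosure = ⊤) {A : E →L[ℂ] E}
    (hAV : ∀ i, ∀ v ∈ V i, A v ∈ V i) {ε : ℝ} (hε : 0 ≤ ε) (s : Finset ι)
    (hA : ∀ i ∉ s, ∀ v ∈ V i, ‖A v‖ ≤ ε * ‖v‖) :
    approxNumber A (∑ i ∈ s, finrank ℂ (V i)) ≤ ε := by
  refine (approxNumber_le_norm_sub ?_).trans (norm_sub_comp_starProjection_le s hV hdense hAV hε hA)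
  refine (rank_range_comp_starProjection_le A _).trans ?_
  exact_mod_cast finrank_finset_sup_le V s

theorem traceClass_of_graded_geometric_bound_general {H : Type*} [NormedAddCommGroup H]
    [InnerProductSpace ℂ H]
    (Hn : ℕ → Submodule ℂ H)
    (horth : ∀ m n, m ≠ n → ∀ x ∈ Hn m, ∀ y ∈ Hn n, (inner ℂ x y : ℂ) = 0)
    (hfd : ∀ n, FiniteDimensional ℂ ↥(Hn n))
    (d : ℕ)
    (hdim : ∀ᶠ n in Filter.atTop, Module.finrank ℂ ↥(Hn n) ≤ n ^ (d - 1))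
    (hdense : (⨆ n, Hn n).topologicalClosure = ⊤)
    (T : H →L[ℂ] H)
    (hgraded : ∀ n, ∀ v ∈ Hn n, T v ∈ Hn n)
    (M c : ℝ) (hM : 0 < M) (hc0 : 0 ≤ c) (hc1 : c < 1)
    (hb : ∀ n, ∀ v ∈ Hn n, ‖(T - 1) v‖ ≤ M * c ^ n * ‖v‖) :
    MemSchatten 1 (T - 1) := by
  have hV : Pairwise ((· ⟂ ·) on Hn) := fun m n hmn =>
    Submodule.isOrtho_iff_inner_eq.2 (horth m n hmn)
  have hAV : ∀ n, ∀ v ∈ Hn n, (T - 1) v ∈ Hn n := fun n v hv =>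
    Submodule.sub_mem _ (hgraded n v hv) hv
  have htail (N : ℕ) : ∀ n ∉ range (N + 1), ∀ v ∈ Hn n, ‖(T - 1) v‖ ≤ M * c ^ (N + 1) * ‖v‖ := by
    intro n hn v hv
    have hcn : c ^ n ≤ c ^ (N + 1) := pow_le_pow_of_le_one hc0 hc1.le (by simpa using hn)
    exact (hb n v hv).trans (by gcongr)
  set g : ℕ → ℕ := fun N => N + ∑ n ∈ range (N + 1), finrank ℂ (Hn n)
  have hg : Monotone g := fun m n hmn =>
    add_le_add hmn (sum_le_sum_of_subset (range_subset_range.2 (by omega)))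
  have hblock (N : ℕ) : g (N + 1) - g N = finrank ℂ (Hn (N + 1)) + 1 := by
    simp only [g, sum_range_succ _ (N + 1)]
    omega
  have hag (N : ℕ) : approxNumber (T - 1) (g N) ≤ M * c ^ (N + 1) :=
    (approxNumber_antitone _ (Nat.le_add_left _ _)).trans
      (approxNumber_sum_finrank_le hV hdense hAV (by positivity) _ (htail N))
  have hweights : Summable fun N => ((g (N + 1) - g N : ℕ) : ℝ) * (M * c ^ (N + 1)) := by
    simp only [hblock]
    refine (((summable_nat_add_iff 1).2
      (summable_succ_mul_geometric_of_eventually_le_pow hdim hc0 hc1)).mul_left M).congr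
      fun N => ?_
    ring
  simp only [MemSchatten, Real.rpow_one]
  exact summable_of_antitone_of_blocks (approxNumber_nonneg _) (approxNumber_antitone _) hg
    (fun n => Nat.le_add_right _ _) hag hweights

/-- If a bounded self-adjoint graded operator `T` on a Hilbert space
`H = ⊕ H_n` (with `dim H_n ≤ n^{d−1}` eventually) satisfies
`‖(T − I)|_{H_n}‖ ≤ M cⁿ` with `0 ≤ c < 1`, then `T − I` is trace class. -/
theorem traceClass_of_graded_geometric_bound {H : Type*} [NormedAddCommGroup H]
    [InnerProductSpace ℂ H] [CompleteSpace H]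
    (Hn : ℕ → Submodule ℂ H)
    (horth : ∀ m n, m ≠ n → ∀ x ∈ Hn m, ∀ y ∈ Hn n, (inner ℂ x y : ℂ) = 0)
    (hfd : ∀ n, FiniteDimensional ℂ ↥(Hn n))
    (d : ℕ) (hd : 0 < d)
    (hdim : ∀ᶠ n in Filter.atTop, Module.finrank ℂ ↥(Hn n) ≤ n ^ (d - 1))
    (hdense : (⨆ n, Hn n).topologicalClosure = ⊤)
    (T : H →L[ℂ] H) (hsa : IsSelfAdjoint T)
    (hgraded : ∀ n, ∀ v ∈ Hn n, T v ∈ Hn n)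
    (M c : ℝ) (hM : 0 < M) (hc0 : 0 ≤ c) (hc1 : c < 1)
    (hb : ∀ n, ∀ v ∈ Hn n, ‖(T - 1) v‖ ≤ M * c ^ n * ‖v‖) :
    MemSchatten 1 (T - 1) :=
  traceClass_of_graded_geometric_bound_general Hn horth hfd d hdim hdense T hgraded M c hM hc0 hc1
    hb

end
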